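/- For every n ∈ {2,3,…} ∪ {ω}, the class of all finite n-partite tournaments has EPPA: every finite n-partite tournament A admits a finite n-partite tournament B containing A as an induced substructure such that every isomorphism between induced substructures of A extends to an automorphism of B. -/

import Mathlib

/-- An ω-partite tournament on vertex set `V`: a directed graph (irreflexive,
antisymmetric) in which non-adjacency is an equivalence relation; its classes are the
parts. -/
structure PartiteTournament (V : Type*) where
  E : V → V → Prop
  asymm : ∀ u v, E u v → ¬ E v u
  nonadj_equiv : Equivalence (fun u v => ¬ E u v ∧ ¬ E v u)

/-- The setoid of non-adjacency, whose classes are the parts. -/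
def nonadjSetoid {V : Type*} (T : PartiteTournament V) : Setoid V :=
  ⟨fun u v => ¬ T.E u v ∧ ¬ T.E v u, T.nonadj_equiv⟩

/-!
Blow `T` up to a tournament on `T.Parts × A` in which every part is a copy of `A`, with `a ↦
(part a, a)` an embedding. A partial automorphism `φ` then extends to a permutation `τ × ρ` of
the blow-up that preserves the partition, but it may reverse edges outside the image of `A`.
These reversals are repaired in the switching cover on `V × (V → Bool)`: the edge between
`(a, χ)` and `(b, ψ)` is `ab` reversed exactly when `χ b ≠ ψ a`, so reversing `ab` can be
undone by flipping one of the bits `χ b`, `ψ a`. A reversed pair always has an endpoint outside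
the image of the domain of `φ`, whose bit is flipped, so the copy of `A` in the cover is carried
along by `φ`. Neither construction changes the number of parts.
-/

theorem Equiv.Perm.exists_apply_comp_eq_comp {X P : Type*} [Finite P] {s : Set X}
    (π : X → P) (f : s → X) (hf : ∀ x y : s, π (f x) = π (f y) ↔ π x = π y) :
    ∃ τ : Equiv.Perm P, ∀ x : s, τ (π x) = π (f x) := by
  classical
  let rep (p : π '' s) : s := ⟨p.2.choose, p.2.choose_spec.1⟩
  have hrep (p : π '' s) : π (rep p) = p := p.2.choose_spec.2
  let g (p : π '' s) : P := π (f (rep p))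
  have hg : Function.Injective g := fun p q hpq =>
    Subtype.ext <| (hrep p).symm.trans <| ((hf _ _).mp hpq).trans (hrep q)
  refine ⟨(Equiv.ofInjective g hg).extendSubtype, fun x => ?_⟩
  have hx : π x ∈ π '' s := ⟨x, x.2, rfl⟩
  rw [Equiv.extendSubtype_apply_of_mem _ _ hx]
  exact (hf _ _).mpr (hrep ⟨_, hx⟩)

theorem exists_xor_eq {V : Type*} (c : V → V → Bool) (hsymm : ∀ a b, c a b = c b a)
    (hdiag : ∀ a, c a a = false) (S : Set V) (hS : ∀ a ∈ S, ∀ b ∈ S, c a b = false) :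
    ∃ d : V → V → Bool, (∀ a ∈ S, ∀ b, d a b = false) ∧ ∀ a b, (d a b ^^ d b a) = c a b := by
  classical
  let _ : LinearOrder V := WellOrderingRel.isWellOrder.linearOrder
  refine ⟨fun a b => if a ∈ S then false else if b ∈ S ∨ a < b then c a b else false,
    fun a ha b => if_pos ha, fun a b => ?_⟩
  by_cases ha : a ∈ S <;> by_cases hb : b ∈ S
  · simp [ha, hb, hS a ha b hb]
  · simp [ha, hb, hsymm b a]
  · simp [ha, hb]
  · rcases lt_trichotomy a b with h | rfl | h
    · simp [ha, hb, h, h.not_gt]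
    · simp [ha, hdiag]
    · simp [ha, hb, h, h.not_gt, hsymm b a]

theorem Bool.iff_xor_eq_xor_iff {P P' : Prop} [Decidable P] [Decidable P'] {x y u v : Bool}
    (h : (u ^^ v) = (decide P ^^ decide P')) :
    (P' ↔ (x ^^ u) = (y ^^ v)) ↔ (P ↔ x = y) := by
  by_cases hP : P <;> by_cases hP' : P' <;> simp only [hP, hP', decide_true] at h ⊢ <;>
    revert h <;> cases x <;> cases y <;> cases u <;> cases v <;> decide

namespace PartiteTournament

variable {V W : Type*}

def Adj (T : PartiteTournament V) (u v : V) : Prop := T.E u v ∨ T.E v u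

theorem irrefl (T : PartiteTournament V) (v : V) : ¬ T.E v v := fun h => T.asymm v v h h

abbrev Parts (T : PartiteTournament V) := Quotient (nonadjSetoid T)

def part (T : PartiteTournament V) (v : V) : T.Parts := Quotient.mk _ v

theorem part_eq_part_iff (T : PartiteTournament V) {u v : V} :
    T.part u = T.part v ↔ ¬ T.Adj u v :=
  Quotient.eq.trans not_or.symm

def ofPartMap (E : V → V → Prop) (asymm : ∀ u v, E u v → ¬ E v u) (f : V → W)
    (hf : ∀ u v, ¬ E u v ∧ ¬ E v u ↔ f u = f v) : PartiteTournament V where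
  E := E
  asymm := asymm
  nonadj_equiv := by
    simp_rw [hf]
    exact eq_equivalence.comap f

theorem card_parts_ofPartMap (E : V → V → Prop) (asymm : ∀ u v, E u v → ¬ E v u) (f : V → W)
    (hf : ∀ u v, ¬ E u v ∧ ¬ E v u ↔ f u = f v) (hsurj : Function.Surjective f) :
    Nat.card (ofPartMap E asymm f hf).Parts = Nat.card W :=
  Nat.card_congr <|
    (Quotient.congrRight fun u v => (hf u v).trans Setoid.ker_def.symm).trans
      (Setoid.quotientKerEquivOfSurjective f hsurj)

def comap (T : PartiteTournament V) (f : W → V) : PartiteTournament W where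
  E a b := T.E (f a) (f b)
  asymm a b := T.asymm (f a) (f b)
  nonadj_equiv := T.nonadj_equiv.comap f

section Switch

variable (T : PartiteTournament V)

def SwitchE (u v : V × (V → Bool)) : Prop :=
  T.Adj u.1 v.1 ∧ (T.E u.1 v.1 ↔ u.2 v.1 = v.2 u.1)

theorem switchE_asymm (u v : V × (V → Bool)) : T.SwitchE u v → ¬ T.SwitchE v u := by
  rintro ⟨huv, hE⟩ ⟨-, hE'⟩
  rw [eq_comm, ← hE] at hE'
  rcases huv with h | h
  · exact T.asymm _ _ h (hE'.mpr h)
  · exact T.asymm _ _ h (hE'.mp h)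

theorem switchE_nonadj_iff (u v : V × (V → Bool)) :
    ¬ T.SwitchE u v ∧ ¬ T.SwitchE v u ↔ T.part u.1 = T.part v.1 := by
  rw [part_eq_part_iff]
  have := T.asymm u.1 v.1
  by_cases h : u.2 v.1 = v.2 u.1 <;>
    simp only [SwitchE, Adj, h, eq_comm (a := v.2 u.1)] <;> tauto

def switch : PartiteTournament (V × (V → Bool)) :=
  ofPartMap T.SwitchE T.switchE_asymm _ T.switchE_nonadj_iff

theorem card_parts_switch : Nat.card T.switch.Parts = Nat.card T.Parts :=
  card_parts_ofPartMap _ _ _ _ fun p =>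
    let ⟨v, hv⟩ := Quotient.exists_rep p
    ⟨(v, fun _ => false), hv⟩

theorem switch_E_of_eq {u v : V × (V → Bool)} (h : u.2 v.1 = v.2 u.1) :
    T.switch.E u v ↔ T.E u.1 v.1 := by
  simp only [switch, ofPartMap, SwitchE, Adj, h, iff_true]
  exact ⟨fun h => h.2, fun h => ⟨Or.inl h, h⟩⟩

end Switch

def switchCongr {T : PartiteTournament V} {T' : PartiteTournament W} (g : T.E ≃r T'.E) :
    T.switch.E ≃r T'.switch.E where
  toEquiv := g.toEquiv.prodCongr (g.toEquiv.arrowCongr (Equiv.refl Bool))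
  map_rel_iff' := by
    rintro ⟨a, χ⟩ ⟨b, ψ⟩
    have hE (x y : V) : T'.E (g x) (g y) ↔ T.E x y := g.map_rel_iff
    have hs (x : V) : g.toEquiv.symm (g x) = x := g.toEquiv.symm_apply_apply x
    simp [switch, ofPartMap, SwitchE, Adj, Equiv.arrowCongr, hE, hs]

theorem exists_switch_relIso_of_adj_iff (T T' : PartiteTournament V)
    (hadj : ∀ a b, T.Adj a b ↔ T'.Adj a b) (S : Set V) (hS : ∀ a ∈ S, ∀ b ∈ S, T.E a b ↔ T'.E a b) :
    ∃ F : T.switch.E ≃r T'.switch.E, ∀ a ∈ S, ∀ χ, F (a, χ) = (a, χ) := by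
  classical
  have hsymm (a b : V) :
      (decide (T.E a b) ^^ decide (T'.E a b)) = (decide (T.E b a) ^^ decide (T'.E b a)) := by
    have := hadj a b
    have := T.asymm a b
    have := T'.asymm a b
    by_cases T.E a b <;> by_cases T.E b a <;> by_cases T'.E a b <;> by_cases T'.E b a <;>
      simp_all [Adj]
  have hdiag (a : V) : (decide (T.E a a) ^^ decide (T'.E a a)) = false := by
    simp [T.irrefl, T'.irrefl]
  obtain ⟨d, hdS, hd⟩ := exists_xor_eq _ hsymm hdiag S fun a ha b hb => by simp [hS a ha b hb]
  let shift (a : V) : Equiv.Perm (V → Bool) :=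
    Function.Involutive.toPerm (fun χ b => χ b ^^ d a b) fun χ => by simp
  refine ⟨⟨Equiv.prodShear (Equiv.refl V) shift, ?_⟩, fun a ha χ => ?_⟩
  · rintro ⟨a, χ⟩ ⟨b, ψ⟩
    simp only [switch, ofPartMap, SwitchE, Equiv.prodShear_apply]
    exact and_congr (hadj a b).symm (Bool.iff_xor_eq_xor_iff (hd a b))
  · simp [shift, hdS a ha]

theorem exists_switch_relIso_extending (T : PartiteTournament V) (σ : Equiv.Perm V)
    (hadj : ∀ a b, T.Adj (σ a) (σ b) ↔ T.Adj a b) (S : Set V)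
    (hS : ∀ a ∈ S, ∀ b ∈ S, T.E (σ a) (σ b) ↔ T.E a b) :
    ∃ F : T.switch.E ≃r T.switch.E, ∀ a ∈ S, ∀ χ, F (a, χ) = (σ a, χ ∘ σ.symm) := by
  obtain ⟨G, hG⟩ := exists_switch_relIso_of_adj_iff T (T.comap σ) (fun a b => (hadj a b).symm) S
    fun a ha b hb => (hS a ha b hb).symm
  refine ⟨G.trans (switchCongr (RelIso.preimage σ T.E)), fun a ha χ => ?_⟩
  rw [RelIso.trans_apply, hG a ha χ]
  rfl

section Blowup

variable {A : Type*} (T : PartiteTournament A)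

def BlowupE (u v : T.Parts × A) : Prop :=
  u.1 ≠ v.1 ∧ (T.E u.2 v.2 ∨ ¬ T.Adj u.2 v.2 ∧ WellOrderingRel u.1 v.1)

theorem blowupE_asymm (u v : T.Parts × A) : T.BlowupE u v → ¬ T.BlowupE v u := by
  rintro ⟨-, h | ⟨hn, hlt⟩⟩ ⟨-, h' | ⟨hn', hlt'⟩⟩
  · exact T.asymm _ _ h h'
  · exact hn' (Or.inr h)
  · exact hn (Or.inr h')
  · exact _root_.asymm hlt hlt'

theorem blowupE_nonadj_iff (u v : T.Parts × A) :
    ¬ T.BlowupE u v ∧ ¬ T.BlowupE v u ↔ u.1 = v.1 := by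
  refine ⟨fun ⟨huv, hvu⟩ => ?_, fun h => ⟨fun huv => huv.1 h, fun hvu => hvu.1 h.symm⟩⟩
  by_contra hne
  by_cases hadj : T.Adj u.2 v.2
  · rcases hadj with h | h
    exacts [huv ⟨hne, Or.inl h⟩, hvu ⟨Ne.symm hne, Or.inl h⟩]
  · have hadj' : ¬ T.Adj v.2 u.2 := fun h => hadj (Or.symm h)
    rcases trichotomous_of WellOrderingRel u.1 v.1 with h | h | h
    exacts [huv ⟨hne, Or.inr ⟨hadj, h⟩⟩, hne h, hvu ⟨Ne.symm hne, Or.inr ⟨hadj', h⟩⟩]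

def blowup : PartiteTournament (T.Parts × A) :=
  ofPartMap T.BlowupE T.blowupE_asymm Prod.fst T.blowupE_nonadj_iff

theorem blowup_adj_iff {u v : T.Parts × A} : T.blowup.Adj u v ↔ u.1 ≠ v.1 := by
  rw [← not_iff_not, Adj, not_or, not_not]
  exact T.blowupE_nonadj_iff u v

theorem card_parts_blowup : Nat.card T.blowup.Parts = Nat.card T.Parts :=
  card_parts_ofPartMap _ _ _ _ fun p => ⟨(p, p.out), rfl⟩

theorem blowup_E_part (a b : A) : T.blowup.E (T.part a, a) (T.part b, b) ↔ T.E a b := by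
  refine ⟨fun ⟨hne, h⟩ => h.resolve_right fun h => hne ?_, fun h => ⟨?_, Or.inl h⟩⟩
  · exact (T.part_eq_part_iff).mpr h.1
  · exact (T.part_eq_part_iff).not_left.mpr (Or.inl h)

theorem exists_perm_blowup [Finite A] {S : Set A} (φ : S → A) (hφ : Function.Injective φ)
    (hE : ∀ u v : S, T.E (φ u) (φ v) ↔ T.E u v) :
    ∃ σ : Equiv.Perm (T.Parts × A), (∀ u v, T.blowup.Adj (σ u) (σ v) ↔ T.blowup.Adj u v) ∧
      ∀ x : S, σ (T.part x, x) = (T.part (φ x), φ x) := by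
  obtain ⟨τ, hτ⟩ := Equiv.Perm.exists_apply_comp_eq_comp T.part φ fun x y => by
    simp only [part_eq_part_iff, Adj, hE]
  obtain ⟨ρ, hρ⟩ := Equiv.Perm.exists_apply_comp_eq_comp id φ fun _ _ =>
    hφ.eq_iff.trans Subtype.ext_iff
  refine ⟨τ.prodCongr ρ, fun u v => ?_, fun x => ?_⟩
  · simp only [blowup_adj_iff, Equiv.prodCongr_apply, Prod.map_fst, ne_eq,
      EmbeddingLike.apply_eq_iff_eq]
  · simp only [Equiv.prodCongr_apply, Prod.map_apply, hτ x]
    exact congrArg _ (hρ x)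

end Blowup

end PartiteTournament

theorem stmt18_general (n : ℕ∞) (A : Type) [Finite A]
    (T : PartiteTournament A)
    (hT : (Nat.card (Quotient (nonadjSetoid T)) : ℕ∞) ≤ n) :
    ∃ (B : Type) (_ : Finite B) (T' : PartiteTournament B) (e : A → B),
      (Nat.card (Quotient (nonadjSetoid T')) : ℕ∞) ≤ n ∧
      Function.Injective e ∧
      (∀ u v, T'.E (e u) (e v) ↔ T.E u v) ∧
      ∀ (S : Set A) (φ : S → A), Function.Injective φ →
        (∀ u v : S, T.E (φ u) (φ v) ↔ T.E u.1 v.1) →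
        ∃ F : B ≃ B, (∀ u v, T'.E (F u) (F v) ↔ T'.E u v) ∧
          ∀ x : S, F (e x.1) = e (φ x) := by
  refine ⟨_, inferInstance, T.blowup.switch, fun a => ((T.part a, a), fun _ => false),
    ?_, fun a b h => congrArg (fun u => u.1.2) h, fun a b => ?_, fun S φ hφ hE => ?_⟩
  · rwa [PartiteTournament.card_parts_switch, PartiteTournament.card_parts_blowup]
  · rw [PartiteTournament.switch_E_of_eq]
    exacts [T.blowup_E_part a b, rfl]
  obtain ⟨σ, hσadj, hσ⟩ := T.exists_perm_blowup φ hφ hE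
  obtain ⟨F, hF⟩ := T.blowup.exists_switch_relIso_extending σ hσadj
    (Set.range fun x : S => (T.part x, x)) (by
      rintro _ ⟨x, rfl⟩ _ ⟨y, rfl⟩
      simp only [hσ, PartiteTournament.blowup_E_part, hE])
  refine ⟨F.toEquiv, fun _ _ => F.map_rel_iff, fun x => ?_⟩
  simp [hF _ ⟨x, rfl⟩, hσ x]

/-- EPPA for `n`-partite tournaments, `n ∈ {2,3,…} ∪ {ω}` (here `n : ℕ∞`, with `n = ⊤`
for the ω case): every finite tournament with at most `n` parts embeds into a finite
tournament with at most `n` parts in which every partial automorphism (isomorphism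
between induced substructures) extends to an automorphism. -/
theorem stmt18 (n : ℕ∞) (hn : 2 ≤ n) (A : Type) [Finite A]
    (T : PartiteTournament A)
    (hT : (Nat.card (Quotient (nonadjSetoid T)) : ℕ∞) ≤ n) :
    ∃ (B : Type) (_ : Finite B) (T' : PartiteTournament B) (e : A → B),
      (Nat.card (Quotient (nonadjSetoid T')) : ℕ∞) ≤ n ∧
      Function.Injective e ∧
      (∀ u v, T'.E (e u) (e v) ↔ T.E u v) ∧
      ∀ (S : Set A) (φ : S → A), Function.Injective φ →
        (∀ u v : S, T.E (φ u) (φ v) ↔ T.E u.1 v.1) →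
        ∃ F : B ≃ B, (∀ u v, T'.E (F u) (F v) ↔ T'.E u v) ∧
          ∀ x : S, F (e x.1) = e (φ x) :=
  stmt18_general n A T hT
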